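/- Every left ample semigroup U embeds into the symmetric inverse semigroup I_U via the map x ↦ σ'_x, where σ'_x : Ux⁺ → Ux is defined by z ↦ zx (here x⁺ = xx⁻¹ computed in an associated inverse semigroup), and the image of this embedding is left ample in I_U. -/

import Mathlib

/-!
In an inverse semigroup idempotents commute, so `(ab)⁻¹ = b⁻¹a⁻¹`. Transported along `φ`, this
makes `x⁺` an idempotent left identity of `x` with `x⁺⁺ = x⁺`, identifies `Ux⁺` with
`{z | z x⁺ = z}`, and shows that `z` lies in `U(xy)⁺` iff `z ∈ Ux⁺` and `zx ∈ Uy⁺`; hence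
`σ'_{xy} = σ'_x σ'_y`. On `Ux⁺` right multiplication by `x` is injective, as `z = z x x⁻¹` there,
so `σ'_x σ'_x⁻¹` is the identity of `Ux⁺`, which is `σ'_{x⁺}`. Finally `σ'_x` determines `x`:
it is defined at `x⁺` with value `x⁺x = x`, and comparing domains gives `x⁺ = y⁺`.
-/

/-- An inverse semigroup: every element `a` has an inverse `a⁻¹`, and it is unique. -/
class InverseSemigroup (T : Type*) extends Semigroup T, Inv T where
  mul_inv_mul : ∀ a : T, a * a⁻¹ * a = a
  inv_mul_inv : ∀ a : T, a⁻¹ * a * a⁻¹ = a⁻¹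
  inv_unique : ∀ {a b : T}, a * b * a = a → b * a * b = b → b = a⁻¹

open scoped Classical

/-- Composition of partial maps (the product in the symmetric inverse semigroup I_U). -/
def pcomp {α : Type*} (f g : α → Option α) : α → Option α := fun a => (f a).bind g

/-- The inverse of a partial map: defined on the image of an injective partial map. -/
noncomputable def pinv {α : Type*} (f : α → Option α) : α → Option α :=
  fun b => if h : ∃ a : α, f a = some b then some h.choose else none

/-- The partial map σ'_x : Ux⁺ → Ux, z ↦ zx, where x⁺ is the unary operation of a
left ample semigroup. -/
noncomputable def sigU {U : Type*} [Semigroup U] (plus : U → U) (x : U) : U → Option U :=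
  fun z => if ∃ u : U, z = u * plus x then some (z * x) else none

namespace InverseSemigroup

variable {T : Type*} [InverseSemigroup T]

theorem inv_inv_eq (a : T) : a⁻¹⁻¹ = a :=
  (inv_unique (inv_mul_inv a) (mul_inv_mul a)).symm

theorem isIdempotentElem_mul_inv (a : T) : IsIdempotentElem (a * a⁻¹) := by
  rw [IsIdempotentElem, ← mul_assoc, mul_inv_mul]

theorem isIdempotentElem_inv_mul (a : T) : IsIdempotentElem (a⁻¹ * a) := by
  rw [IsIdempotentElem, ← mul_assoc, inv_mul_inv]

theorem inv_eq_self_of_isIdempotentElem {e : T} (he : IsIdempotentElem e) : e⁻¹ = e :=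
  (inv_unique (by rw [he.eq, he.eq]) (by rw [he.eq, he.eq])).symm

/-- With `x = (ef)⁻¹`, the element `fxe` is another inverse of `ef`, so `x = fxe` is idempotent,
and hence so is its inverse `ef`. -/
theorem isIdempotentElem_mul {e f : T} (he : IsIdempotentElem e) (hf : IsIdempotentElem f) :
    IsIdempotentElem (e * f) := by
  set x := (e * f)⁻¹
  have hx : f * x * e = x := by
    refine inv_unique ?_ ?_
    · calc e * f * (f * x * e) * (e * f) = e * f * x * (e * f) := by
            simp only [mul_assoc, he.mul_self_mul, hf.mul_self_mul]
        _ = e * f := mul_inv_mul _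
    · calc f * x * e * (e * f) * (f * x * e) = f * (x * (e * f) * x) * e := by
            simp only [mul_assoc, he.mul_self_mul, hf.mul_self_mul]
        _ = f * x * e := by rw [inv_mul_inv]
  have hxx : IsIdempotentElem x := by
    calc x * x = f * (x * (e * f) * x) * e := by
          conv_lhs => rw [← hx]
          simp only [mul_assoc]
      _ = x := by rw [inv_mul_inv, hx]
  rw [← inv_inv_eq (e * f), inv_eq_self_of_isIdempotentElem hxx]
  exact hxx

theorem commute_of_isIdempotentElem {e f : T} (he : IsIdempotentElem e)
    (hf : IsIdempotentElem f) : Commute e f := by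
  have hef := isIdempotentElem_mul he hf
  have hfe := isIdempotentElem_mul hf he
  have : f * e = (e * f)⁻¹ := by
    refine inv_unique ?_ ?_
    · calc e * f * (f * e) * (e * f) = e * f * (e * f) := by
            simp only [mul_assoc, he.mul_self_mul, hf.mul_self_mul]
        _ = e * f := hef.eq
    · calc f * e * (e * f) * (f * e) = f * e * (f * e) := by
            simp only [mul_assoc, he.mul_self_mul, hf.mul_self_mul]
        _ = f * e := hfe.eq
  rw [Commute, SemiconjBy, this, inv_eq_self_of_isIdempotentElem hef]

theorem mul_inv_rev (a b : T) : (a * b)⁻¹ = b⁻¹ * a⁻¹ := by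
  have hc := commute_of_isIdempotentElem (isIdempotentElem_inv_mul a) (isIdempotentElem_mul_inv b)
  refine (inv_unique ?_ ?_).symm
  · calc a * b * (b⁻¹ * a⁻¹) * (a * b) = a * ((b * b⁻¹) * (a⁻¹ * a)) * b := by
          simp only [mul_assoc]
      _ = a * a⁻¹ * a * (b * b⁻¹ * b) := by rw [← hc.eq]; simp only [mul_assoc]
      _ = a * b := by rw [mul_inv_mul, mul_inv_mul]
  · calc b⁻¹ * a⁻¹ * (a * b) * (b⁻¹ * a⁻¹) = b⁻¹ * ((a⁻¹ * a) * (b * b⁻¹)) * a⁻¹ := by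
          simp only [mul_assoc]
      _ = b⁻¹ * b * b⁻¹ * (a⁻¹ * a * a⁻¹) := by rw [hc.eq]; simp only [mul_assoc]
      _ = b⁻¹ * a⁻¹ := by rw [inv_mul_inv, inv_mul_inv]

theorem mul_mul_inv_eq_self_iff (w a b : T) :
    w * (a * b * (a * b)⁻¹) = w ↔ w * (a * a⁻¹) = w ∧ w * a * (b * b⁻¹) = w * a := by
  have hc := commute_of_isIdempotentElem (isIdempotentElem_inv_mul a) (isIdempotentElem_mul_inv b)
  have hw : w * (a * b * (a * b)⁻¹) = w * a * (b * b⁻¹) * a⁻¹ := by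
    rw [mul_inv_rev]; simp only [mul_assoc]
  rw [hw]
  constructor
  · intro h
    refine ⟨?_, ?_⟩
    · calc w * (a * a⁻¹) = w * a * (b * b⁻¹) * (a⁻¹ * a * a⁻¹) := by
            nth_rewrite 1 [← h]; simp only [mul_assoc]
        _ = w := by rw [inv_mul_inv, h]
    · calc w * a * (b * b⁻¹) = w * a * (b * b⁻¹) * a⁻¹ * a * (b * b⁻¹) := by rw [h]
        _ = w * a * ((b * b⁻¹) * (b * b⁻¹)) * (a⁻¹ * a) := by
            rw [mul_assoc (w * a * (b * b⁻¹)) a⁻¹ a, mul_assoc _ (a⁻¹ * a), hc.eq]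
            simp only [mul_assoc]
        _ = w * a := by
            rw [(isIdempotentElem_mul_inv b).eq, ← mul_assoc, h]
  · rintro ⟨ha, hb⟩
    rw [hb, mul_assoc, ha]

theorem eq_of_mul_eq_mul_of_mul_mul_inv_eq_self {w w' a : T} (hw : w * (a * a⁻¹) = w)
    (hw' : w' * (a * a⁻¹) = w') (h : w * a = w' * a) : w = w' := by
  rw [← hw, ← hw', ← mul_assoc, h, mul_assoc]

end InverseSemigroup

section PartialMap

variable {α : Type*}

theorem pcomp_pinv_apply {f : α → Option α}
    (hf : ∀ a b c, f a = some c → f b = some c → a = b) (a : α) :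
    pcomp f (pinv f) a = (f a).map fun _ => a := by
  cases hfa : f a with
  | none => simp [pcomp, hfa]
  | some c =>
    have hc : ∃ b, f b = some c := ⟨a, hfa⟩
    simp [pcomp, pinv, hfa, hc, hf _ _ _ hc.choose_spec hfa]

end PartialMap

theorem sigU_apply {U : Type*} [Semigroup U] {plus : U → U} {x : U}
    (hx : IsIdempotentElem (plus x)) (z : U) :
    sigU plus x z = if z * plus x = z then some (z * x) else none := by
  have hdom : (∃ u, z = u * plus x) ↔ z * plus x = z :=
    ⟨fun ⟨u, hu⟩ => by rw [hu, hx.mul_mul_self], fun h => ⟨z, h.symm⟩⟩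
  simp only [sigU, hdom]

section LeftAmple

variable {U T : Type*} [Semigroup U] [InverseSemigroup T] {φ : U →ₙ* T} {plus : U → U}

open InverseSemigroup

theorem mul_plus_eq_self_iff (hφ : Function.Injective φ)
    (hplus : ∀ x, φ (plus x) = φ x * (φ x)⁻¹) (x z : U) :
    z * plus x = z ↔ φ z * (φ x * (φ x)⁻¹) = φ z := by
  rw [← hplus, ← map_mul, hφ.eq_iff]

theorem isIdempotentElem_plus (hφ : Function.Injective φ)
    (hplus : ∀ x, φ (plus x) = φ x * (φ x)⁻¹) (x : U) : IsIdempotentElem (plus x) :=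
  hφ (by rw [map_mul, hplus, (isIdempotentElem_mul_inv _).eq])

theorem plus_mul_self (hφ : Function.Injective φ)
    (hplus : ∀ x, φ (plus x) = φ x * (φ x)⁻¹) (x : U) : plus x * x = x :=
  hφ (by rw [map_mul, hplus, mul_inv_mul])

theorem plus_plus (hφ : Function.Injective φ)
    (hplus : ∀ x, φ (plus x) = φ x * (φ x)⁻¹) (x : U) : plus (plus x) = plus x :=
  hφ (by rw [hplus, hplus, inv_eq_self_of_isIdempotentElem (isIdempotentElem_mul_inv _),
    (isIdempotentElem_mul_inv _).eq])

theorem commute_plus (hφ : Function.Injective φ)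
    (hplus : ∀ x, φ (plus x) = φ x * (φ x)⁻¹) (x y : U) : Commute (plus x) (plus y) :=
  hφ (by simp only [map_mul, hplus,
    (commute_of_isIdempotentElem (isIdempotentElem_mul_inv (φ x))
      (isIdempotentElem_mul_inv (φ y))).eq])

theorem mul_plus_mul_eq_self_iff (hφ : Function.Injective φ)
    (hplus : ∀ x, φ (plus x) = φ x * (φ x)⁻¹) (x y z : U) :
    z * plus (x * y) = z ↔ z * plus x = z ∧ z * x * plus y = z * x := by
  simp only [mul_plus_eq_self_iff hφ hplus, map_mul]
  exact mul_mul_inv_eq_self_iff _ _ _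

theorem sigU_injective (hφ : Function.Injective φ)
    (hplus : ∀ x, φ (plus x) = φ x * (φ x)⁻¹) : Function.Injective (sigU plus) := by
  have of_sigU_eq : ∀ x y, sigU plus x = sigU plus y →
      plus x * plus y = plus x ∧ plus x * y = x := by
    intro x y h
    have hx : sigU plus y (plus x) = some x := by
      rw [← h, sigU_apply (isIdempotentElem_plus hφ hplus x),
        if_pos (isIdempotentElem_plus hφ hplus x).eq, plus_mul_self hφ hplus]
    rw [sigU_apply (isIdempotentElem_plus hφ hplus y)] at hx
    split_ifs at hx with hxy
    exact ⟨hxy, Option.some.inj hx⟩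
  intro x y h
  obtain ⟨hxy, hx⟩ := of_sigU_eq x y h
  obtain ⟨hyx, -⟩ := of_sigU_eq y x h.symm
  have hplus_eq : plus x = plus y := by rw [← hxy, (commute_plus hφ hplus x y).eq, hyx]
  rw [← hx, hplus_eq, plus_mul_self hφ hplus]

theorem sigU_mul (hφ : Function.Injective φ)
    (hplus : ∀ x, φ (plus x) = φ x * (φ x)⁻¹) (x y : U) :
    sigU plus (x * y) = pcomp (sigU plus x) (sigU plus y) := by
  funext z
  simp only [pcomp, sigU_apply (isIdempotentElem_plus hφ hplus _),
    mul_plus_mul_eq_self_iff hφ hplus]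
  split_ifs <;> simp_all [mul_assoc]

theorem pcomp_sigU_pinv (hφ : Function.Injective φ)
    (hplus : ∀ x, φ (plus x) = φ x * (φ x)⁻¹) (x : U) :
    pcomp (sigU plus x) (pinv (sigU plus x)) = sigU plus (plus x) := by
  have hx := isIdempotentElem_plus hφ hplus x
  have hinj : ∀ a b c, sigU plus x a = some c → sigU plus x b = some c → a = b := by
    intro a b c ha hb
    rw [sigU_apply hx] at ha hb
    split_ifs at ha hb with ha' hb'
    refine hφ (eq_of_mul_eq_mul_of_mul_mul_inv_eq_self (a := φ x) ?_ ?_ ?_)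
    · exact (mul_plus_eq_self_iff hφ hplus x a).1 ha'
    · exact (mul_plus_eq_self_iff hφ hplus x b).1 hb'
    · rw [← map_mul, ← map_mul, Option.some.inj ha, Option.some.inj hb]
  funext z
  rw [pcomp_pinv_apply hinj, sigU_apply hx, sigU_apply (isIdempotentElem_plus hφ hplus _),
    plus_plus hφ hplus]
  split_ifs with hz <;> simp [hz]

end LeftAmple

/-- Every left ample semigroup U (with embedding φ into an associated inverse semigroup T and
x⁺ = the preimage of (xφ)(xφ)⁻¹) embeds into the symmetric inverse semigroup I_U via
x ↦ σ'_x : Ux⁺ → Ux, z ↦ zx, and the image of this embedding is left ample in I_U. -/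
theorem stmt10 {U T : Type*} [Semigroup U] [InverseSemigroup T]
    (φ : U →ₙ* T) (hφ : Function.Injective φ) (plus : U → U)
    (hplus : ∀ x : U, φ (plus x) = φ x * (φ x)⁻¹) :
    Function.Injective (sigU plus) ∧
    (∀ x y : U, sigU plus (x * y) = pcomp (sigU plus x) (sigU plus y)) ∧
    (∀ x : U, ∃ y : U, pcomp (sigU plus x) (pinv (sigU plus x)) = sigU plus y) :=
  ⟨sigU_injective hφ hplus, sigU_mul hφ hplus, fun x => ⟨plus x, pcomp_sigU_pinv hφ hplus x⟩⟩
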